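/- arXiv:1704.00899 — 2 statements merged into one kernel-verified Lean document; each statement's English description precedes it below -/
import Mathlib

section
/- Let G be an instance of the rank-maximal matching problem and let H be obtained from G by adding a new applicant vertex a together with a set of ranked edges joining a to posts of G. If M is a rank-maximal matching of G and M' is a rank-maximal matching of H, then |M| ≤ |M'| ≤ |M| + 1. -/
open SimpleGraph

variable {V : Type*}

/-- `M` is a matching in the graph `G`: a set of edges of `G` no two of which
share a vertex. -/
def IsMatchingIn (G : SimpleGraph V) (M : Set (Sym2 V)) : Prop :=
  M ⊆ G.edgeSet ∧ ∀ e ∈ M, ∀ f ∈ M, e ≠ f → ∀ v : V, v ∈ e → v ∉ f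

/-- A vertex `v` is matched (covered) by the matching `M`. -/
def IsMatchedBy (M : Set (Sym2 V)) (v : V) : Prop :=
  ∃ e ∈ M, v ∈ e

/-- The list of edges of a path given as a list of vertices. -/
def pathEdges (p : List V) : List (Sym2 V) :=
  (p.zip p.tail).map fun q => s(q.1, q.2)

/-- `p` is an alternating path from `u` to `v` in `G` with respect to the matching `M`:
its consecutive vertices are adjacent in `G`, it repeats no vertex, and its edges
alternate between edges in `M` and edges not in `M`. -/
def IsAltPath (G : SimpleGraph V) (M : Set (Sym2 V)) (u v : V) (p : List V) : Prop :=
  p.Chain' G.Adj ∧ p.Nodup ∧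
    (pathEdges p).Chain' (fun e f => (e ∈ M ↔ f ∉ M)) ∧
    p.head? = some u ∧ p.getLast? = some v

/-- `v` is even with respect to `M`: there is an even-length alternating path from
an `M`-unmatched vertex to `v`. -/
def EvenVtx (G : SimpleGraph V) (M : Set (Sym2 V)) (v : V) : Prop :=
  ∃ u p, ¬ IsMatchedBy M u ∧ IsAltPath G M u v p ∧ Even (pathEdges p).length

/-- `v` is odd with respect to `M`: there is an odd-length alternating path from
an `M`-unmatched vertex to `v`. -/
def OddVtx (G : SimpleGraph V) (M : Set (Sym2 V)) (v : V) : Prop :=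
  ∃ u p, ¬ IsMatchedBy M u ∧ IsAltPath G M u v p ∧ Odd (pathEdges p).length

/-- `v` is unreachable with respect to `M`: there is no alternating path from any
`M`-unmatched vertex to `v`. -/
def UnreachableVtx (G : SimpleGraph V) (M : Set (Sym2 V)) (v : V) : Prop :=
  ¬ ∃ u p, ¬ IsMatchedBy M u ∧ IsAltPath G M u v p

/-- `M` is a maximum (cardinality) matching in `G`. -/
def IsMaxMatching (G : SimpleGraph V) (M : Set (Sym2 V)) : Prop :=
  IsMatchingIn G M ∧ ∀ N, IsMatchingIn G N → N.ncard ≤ M.ncard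

/-- `G` is bipartite with the two sides given by `side`. -/
def IsBipartiteWith (G : SimpleGraph V) (side : V → Bool) : Prop :=
  ∀ u v, G.Adj u v → side u ≠ side v

/-- The signature of a matching: `signature rank M i` is the number of edges of
rank `i` in `M`. -/
noncomputable def signature (rank : Sym2 V → ℕ) (M : Set (Sym2 V)) (i : ℕ) : ℕ :=
  {e ∈ M | rank e = i}.ncard

/-- Lexicographic comparison of signatures on coordinates `1, …, r`:
`SigGt r x y` means `x ≻ y`. -/
def SigGt (r : ℕ) (x y : ℕ → ℕ) : Prop :=
  ∃ k, 1 ≤ k ∧ k ≤ r ∧ (∀ j, 1 ≤ j → j < k → x j = y j) ∧ y k < x k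

/-- `M` is a rank-maximal matching of the instance `(G, rank)` with ranks in
`{1, …, r}`: no matching of `G` has a lexicographically greater signature. -/
def IsRankMaximal (G : SimpleGraph V) (rank : Sym2 V → ℕ) (r : ℕ)
    (M : Set (Sym2 V)) : Prop :=
  IsMatchingIn G M ∧
    ∀ N, IsMatchingIn G N → ¬ SigGt r (signature rank N) (signature rank M)

/-- All edges of `G` carry a rank in `{1, …, r}`. -/
def RanksBounded (G : SimpleGraph V) (rank : Sym2 V → ℕ) (r : ℕ) : Prop :=
  ∀ e ∈ G.edgeSet, 1 ≤ rank e ∧ rank e ≤ r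

/-! Let `R` be the set of edges of the connected component of `a` in the symmetric difference
`M ∆ M'`. Exchanging `M` and `M'` on `R` yields a matching of `H` and, since every edge of `M'`
at `a` lies in `R`, a matching of `G`. Rank-maximality of `M` and of `M'` then forces `M \ R` and
`M' \ R` to have the same signature, hence the same size. Inside `R` the two matchings alternate
along a path starting at `a`, which `M` leaves unmatched, so `M'` has as many edges there as `M`
or one more. -/

theorem IsMatchingIn.mono {G H : SimpleGraph V} {M : Set (Sym2 V)} (hM : IsMatchingIn G M)
    (hGH : G ≤ H) : IsMatchingIn H M :=
  ⟨hM.1.trans (edgeSet_mono hGH), hM.2⟩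

theorem IsMatchingIn.subset {G : SimpleGraph V} {M N : Set (Sym2 V)} (hM : IsMatchingIn G M)
    (hNM : N ⊆ M) : IsMatchingIn G N :=
  ⟨hNM.trans hM.1, fun e he f hf => hM.2 e (hNM he) f (hNM hf)⟩

theorem IsMatchingIn.not_isMatchedBy {G : SimpleGraph V} {M : Set (Sym2 V)} {a : V}
    (hM : IsMatchingIn G M) (ha : ∀ v, ¬ G.Adj a v) : ¬ IsMatchedBy M a :=
  fun ⟨e, he, hae⟩ => by
    obtain ⟨v, rfl⟩ := Sym2.mem_iff_exists.1 hae
    exact ha v (hM.1 he)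

theorem IsMatchingIn.ite {G : SimpleGraph V} {M M' R : Set (Sym2 V)} (hM : IsMatchingIn G M)
    (hM' : IsMatchingIn G M')
    (hR : ∀ e ∈ R, ∀ f ∈ symmDiff M M' \ R, ∀ v ∈ e, v ∉ f) :
    IsMatchingIn G (R.ite M' M) := by
  have cross : ∀ e ∈ M' ∩ R, ∀ f ∈ M \ R, e ≠ f → ∀ v ∈ e, v ∉ f := by
    rintro e ⟨heM', heR⟩ f ⟨hfM, hfR⟩ hef v hve
    by_cases hfM' : f ∈ M'
    · exact hM'.2 e heM' f hfM' hef v hve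
    · exact hR e heR f ⟨Set.mem_symmDiff.2 (.inl ⟨hfM, hfM'⟩), hfR⟩ v hve
  refine ⟨?_, ?_⟩
  · rintro e (he | he)
    exacts [hM'.1 he.1, hM.1 he.1]
  · rintro e (he | he) f (hf | hf) hef v hve hvf
    · exact hM'.2 e he.1 f hf.1 hef v hve hvf
    · exact cross e he f hf hef v hve hvf
    · exact cross f hf e he hef.symm v hvf hve
    · exact hM.2 e he.1 f hf.1 hef v hve hvf

theorem mem_edgeSet_of_notMem {G H : SimpleGraph V} {a : V} {N : Set V}
    (hH : ∀ u v, H.Adj u v ↔ G.Adj u v ∨ (u = a ∧ v ∈ N) ∨ (v = a ∧ u ∈ N))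
    {e : Sym2 V} (he : e ∈ H.edgeSet) (hae : a ∉ e) : e ∈ G.edgeSet := by
  induction e using Sym2.ind with
  | _ u w =>
  rcases (hH u w).1 he with h | ⟨rfl, -⟩ | ⟨rfl, -⟩
  exacts [h, absurd (Sym2.mem_mk_left _ _) hae, absurd (Sym2.mem_mk_right _ _) hae]

def componentEdges (E : Set (Sym2 V)) (a : V) : Set (Sym2 V) :=
  {e ∈ E | ∃ v ∈ e, (fromEdgeSet E).Reachable a v}

theorem componentEdges_subset (E : Set (Sym2 V)) (a : V) : componentEdges E a ⊆ E :=
  Set.sep_subset _ _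

theorem reachable_of_mem_componentEdges {E : Set (Sym2 V)} {a v : V} {e : Sym2 V}
    (he : e ∈ componentEdges E a) (hv : v ∈ e) : (fromEdgeSet E).Reachable a v := by
  obtain ⟨heE, w, hw, haw⟩ := he
  by_cases hwv : w = v
  · exact hwv ▸ haw
  · have hew : e = s(w, v) := (Sym2.mem_and_mem_iff hwv).1 ⟨hw, hv⟩
    exact haw.trans ((fromEdgeSet_adj _).2 ⟨hew ▸ heE, hwv⟩).reachable

theorem notMem_of_mem_componentEdges {E : Set (Sym2 V)} {a v : V} {e f : Sym2 V}
    (he : e ∈ componentEdges E a) (hf : f ∈ E \ componentEdges E a) (hv : v ∈ e) : v ∉ f :=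
  fun hvf => hf.2 ⟨hf.1, v, hvf, reachable_of_mem_componentEdges he hv⟩

theorem reachable_fromEdgeSet_componentEdges {E : Set (Sym2 V)} {a v : V}
    (h : (fromEdgeSet E).Reachable a v) : (fromEdgeSet (componentEdges E a)).Reachable a v := by
  suffices ∀ {u w} (p : (fromEdgeSet E).Walk u w), (fromEdgeSet E).Reachable a u →
      (fromEdgeSet (componentEdges E a)).Reachable u w from this h.some .rfl
  intro u w p
  induction p with
  | nil => exact fun _ => .rfl
  | @cons u x w hux p ih =>
    intro hau
    have hux' := (fromEdgeSet_adj _).1 hux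
    have hadj : (fromEdgeSet (componentEdges E a)).Adj u x :=
      (fromEdgeSet_adj _).2 ⟨⟨hux'.1, u, Sym2.mem_mk_left u x, hau⟩, hux'.2⟩
    exact hadj.reachable.trans (ih (hau.trans hux.reachable))

theorem componentEdges_componentEdges (E : Set (Sym2 V)) (a : V) :
    componentEdges (componentEdges E a) a = componentEdges E a := by
  refine (componentEdges_subset _ _).antisymm fun e he => ⟨he, ?_⟩
  obtain ⟨-, v, hv, hav⟩ := he
  exact ⟨v, hv, reachable_fromEdgeSet_componentEdges hav⟩

theorem componentEdges_eq_empty {E : Set (Sym2 V)} {a : V} (ha : ¬ IsMatchedBy E a) :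
    componentEdges E a = ∅ := by
  refine Set.eq_empty_of_forall_notMem fun e ⟨heE, v, hv, hav⟩ => ?_
  obtain ⟨p⟩ := hav
  cases p with
  | nil => exact ha ⟨e, heE, hv⟩
  | cons h _ => exact ha ⟨_, ((fromEdgeSet_adj _).1 h).1, Sym2.mem_mk_left _ _⟩

theorem componentEdges_sdiff_singleton {E : Set (Sym2 V)} {a b : V}
    (hab : ∀ e ∈ E, a ∈ e → e = s(a, b)) (hE : componentEdges E a = E) :
    componentEdges (E \ {s(a, b)}) b = E \ {s(a, b)} := by
  classical
  refine (componentEdges_subset _ _).antisymm fun e he => ⟨he, ?_⟩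
  obtain ⟨-, v, hv, hav⟩ : e ∈ componentEdges E a := hE.symm ▸ he.1
  obtain ⟨p, hp⟩ := hav.some.toPath
  cases p with
  | nil => exact absurd (hab e he.1 hv) he.2
  | @cons _ w _ haw p =>
    obtain rfl : b = w :=
      (Sym2.congr_right.1 (hab _ ((fromEdgeSet_adj _).1 haw).1 (Sym2.mem_mk_left a w))).symm
    -- the rest of the path avoids `a`, hence the edge `s(a, b)`
    refine ⟨v, hv, ⟨p.transfer _ fun f hf => ?_⟩⟩
    have hfE := p.edges_subset_edgeSet hf
    rw [edgeSet_fromEdgeSet] at hfE ⊢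
    refine ⟨⟨hfE.1, ?_⟩, hfE.2⟩
    rintro rfl
    exact (Walk.cons_isPath_iff _ _).1 hp |>.2 (p.fst_mem_support_of_mem_edges hf)

theorem ncard_le_ncard_le_add_one_of_componentEdges [Finite V] {G : SimpleGraph V}
    {X Y : Set (Sym2 V)} {a : V} (hX : IsMatchingIn G X) (hY : IsMatchingIn G Y)
    (haX : ¬ IsMatchedBy X a) (hXY : componentEdges (X ∪ Y) a = X ∪ Y) :
    X.ncard ≤ Y.ncard ∧ Y.ncard ≤ X.ncard + 1 := by
  induction hn : X.ncard + Y.ncard using Nat.strong_induction_on generalizing X Y a with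
  | _ n ih =>
  by_cases haY : IsMatchedBy Y a
  swap
  · have haXY : ¬ IsMatchedBy (X ∪ Y) a := by
      rintro ⟨e, he | he, hae⟩
      exacts [haX ⟨e, he, hae⟩, haY ⟨e, he, hae⟩]
    rw [componentEdges_eq_empty haXY, eq_comm, Set.union_empty_iff] at hXY
    simp [hXY.1, hXY.2]
  -- Drop the edge `s(a, b)` of `Y`; what remains is connected to `b`, which `Y` then leaves
  -- unmatched, so the induction hypothesis applies with the roles of `X` and `Y` exchanged.
  obtain ⟨e₀, he₀, hae₀⟩ := haY
  obtain ⟨b, rfl⟩ := Sym2.mem_iff_exists.1 hae₀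
  have hab : ∀ e ∈ X ∪ Y, a ∈ e → e = s(a, b) := by
    rintro e (he | he) hae
    · exact absurd ⟨e, he, hae⟩ haX
    · by_contra hne
      exact hY.2 e he _ he₀ hne a hae hae₀
  have hbY : ¬ IsMatchedBy (Y \ {s(a, b)}) b := fun ⟨e, he, hbe⟩ =>
    hY.2 e he.1 _ he₀ he.2 b hbe (Sym2.mem_mk_right a b)
  have hYX : Y \ {s(a, b)} ∪ X = (X ∪ Y) \ {s(a, b)} := by
    rw [Set.union_sdiff_distrib, Set.sdiff_singleton_eq_self fun h => haX ⟨_, h, hae₀⟩,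
      Set.union_comm]
  have hY₀ := Set.ncard_sdiff_singleton_add_one he₀ Y.toFinite
  have := ih _ (by omega) (hY.subset Set.sdiff_subset) hX hbY
    (hYX ▸ componentEdges_sdiff_singleton hab hXY) rfl
  omega

theorem signature_inter_add_sdiff [Finite V] (rank : Sym2 V → ℕ) (M R : Set (Sym2 V)) :
    signature rank (M ∩ R) + signature rank (M \ R) = signature rank M := by
  funext i
  rw [Pi.add_apply, signature, signature, signature,
    ← Set.ncard_inter_add_ncard_sdiff_eq_ncard {e ∈ M | rank e = i} R]
  congr 2 <;> ext e <;> simp only [Set.mem_ofPred_eq, Set.mem_inter_iff, Set.mem_sdiff] <;> tauto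

theorem RanksBounded.ncard_eq_sum_signature [Finite V] {G : SimpleGraph V}
    {rank : Sym2 V → ℕ} {r : ℕ} (hr : RanksBounded G rank r) {S : Set (Sym2 V)}
    (hS : S ⊆ G.edgeSet) : S.ncard = ∑ i ∈ Finset.Icc 1 r, signature rank S i := by
  classical
  rw [Set.ncard_eq_toFinset_card S S.toFinite, Finset.card_eq_sum_card_fiberwise (f := rank)
    fun e he => Finset.mem_Icc.2 (hr e (hS (S.toFinite.mem_toFinset.1 he)))]
  refine Finset.sum_congr rfl fun i _ => ?_
  rw [signature, ← Set.ncard_coe_finset]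
  congr 1
  ext e
  simp

theorem SigGt.add_left {r : ℕ} {x y : ℕ → ℕ} (h : SigGt r x y) (c : ℕ → ℕ) :
    SigGt r (c + x) (c + y) := by
  obtain ⟨k, hk1, hkr, heq, hlt⟩ := h
  exact ⟨k, hk1, hkr, fun j hj1 hjk => by simp [heq j hj1 hjk], by simpa using hlt⟩

theorem sigGt_or_sigGt_of_ne {r : ℕ} {x y : ℕ → ℕ}
    (h : ∃ i ∈ Finset.Icc 1 r, x i ≠ y i) :
    SigGt r x y ∨ SigGt r y x := by
  classical
  have hP : ∃ i, (1 ≤ i ∧ i ≤ r) ∧ x i ≠ y i := by simpa using h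
  obtain ⟨⟨hk1, hkr⟩, hne⟩ := Nat.find_spec hP
  have hmin : ∀ j, 1 ≤ j → j < Nat.find hP → x j = y j := fun j hj1 hjk =>
    not_not.1 fun hne => Nat.find_min hP hjk ⟨⟨hj1, by omega⟩, hne⟩
  rcases Nat.lt_or_gt_of_ne hne with hlt | hlt
  · exact .inr ⟨_, hk1, hkr, fun j hj1 hjk => (hmin j hj1 hjk).symm, hlt⟩
  · exact .inl ⟨_, hk1, hkr, hmin, hlt⟩

theorem IsRankMaximal.not_sigGt_sdiff [Finite V] {G : SimpleGraph V} {rank : Sym2 V → ℕ}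
    {r : ℕ} {M N R : Set (Sym2 V)} (hM : IsRankMaximal G rank r M)
    (hN : IsMatchingIn G (R.ite M N)) :
    ¬ SigGt r (signature rank (N \ R)) (signature rank (M \ R)) := fun h => by
  refine hM.2 _ hN ?_
  rw [← signature_inter_add_sdiff rank (R.ite M N) R, Set.ite_inter_self, Set.ite_sdiff_self,
    ← signature_inter_add_sdiff rank M R]
  exact h.add_left _

theorem IsRankMaximal.signature_sdiff_eq [Finite V] {G H : SimpleGraph V} {rank : Sym2 V → ℕ}
    {r : ℕ} {M M' R : Set (Sym2 V)} (hM : IsRankMaximal G rank r M)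
    (hM' : IsRankMaximal H rank r M') (hG : IsMatchingIn G (R.ite M M'))
    (hH : IsMatchingIn H (R.ite M' M)) :
    ∀ i ∈ Finset.Icc 1 r, signature rank (M \ R) i = signature rank (M' \ R) i := by
  by_contra! h
  rcases sigGt_or_sigGt_of_ne h with h | h
  exacts [hM'.not_sigGt_sdiff hH h, hM.not_sigGt_sdiff hG h]

theorem add_applicant_cardinality_general [Fintype V]
    (G H : SimpleGraph V)
    (rank : Sym2 V → ℕ) (r : ℕ) (hr : RanksBounded H rank r)
    (a : V) (haG : ∀ v, ¬ G.Adj a v)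
    (N : Set V)
    (hH : ∀ u v, H.Adj u v ↔ G.Adj u v ∨ (u = a ∧ v ∈ N) ∨ (v = a ∧ u ∈ N))
    (M M' : Set (Sym2 V))
    (hM : IsRankMaximal G rank r M) (hM' : IsRankMaximal H rank r M') :
    M.ncard ≤ M'.ncard ∧ M'.ncard ≤ M.ncard + 1 := by
  set R := componentEdges (symmDiff M M') a
  have hMH : IsMatchingIn H M := hM.1.mono fun u v h => (hH u v).2 (.inl h)
  have haM : ¬ IsMatchedBy M a := hM.1.not_isMatchedBy haG
  have hsep (e) (he : e ∈ R) (f) (hf : f ∈ symmDiff M M' \ R) (v) (hv : v ∈ e) : v ∉ f :=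
    notMem_of_mem_componentEdges he hf hv
  have hG : IsMatchingIn G (R.ite M M') := by
    refine ⟨?_, (hM'.1.ite hMH (symmDiff_comm M M' ▸ hsep)).2⟩
    rintro e (⟨heM, -⟩ | ⟨heM', heR⟩)
    · exact hM.1.1 heM
    by_cases heM : e ∈ M
    · exact hM.1.1 heM
    exact mem_edgeSet_of_notMem hH (hM'.1.1 heM') fun hae =>
      heR ⟨Set.mem_symmDiff.2 (.inr ⟨heM', heM⟩), a, hae, .rfl⟩
  have hout : (M \ R).ncard = (M' \ R).ncard := by
    rw [hr.ncard_eq_sum_signature (Set.sdiff_subset.trans hMH.1),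
      hr.ncard_eq_sum_signature (Set.sdiff_subset.trans hM'.1.1)]
    exact Finset.sum_congr rfl (hM.signature_sdiff_eq hM' hG (hMH.ite hM'.1 hsep))
  have hRMM' : M ∩ R ∪ M' ∩ R = R := by
    rw [← Set.union_inter_distrib_right, Set.inter_eq_right]
    exact (componentEdges_subset _ _).trans symmDiff_le_sup
  have hin := ncard_le_ncard_le_add_one_of_componentEdges (X := M ∩ R)
    (hMH.subset Set.inter_subset_left) (hM'.1.subset Set.inter_subset_left)
    (fun ⟨e, he, hae⟩ => haM ⟨e, he.1, hae⟩)
    (by rw [hRMM']; exact componentEdges_componentEdges _ _)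
  rw [← Set.ncard_inter_add_ncard_sdiff_eq_ncard M R,
    ← Set.ncard_inter_add_ncard_sdiff_eq_ncard M' R]
  omega

/-- Let `H` be obtained from `G` by adding a new applicant `a`
(modelled as a vertex isolated in `G`) together with ranked edges from `a` to a
set `N` of posts. If `M` is a rank-maximal matching of `G` and `M'` is a
rank-maximal matching of `H`, then `|M| ≤ |M'| ≤ |M| + 1`. -/
theorem add_applicant_cardinality [Fintype V]
    (G H : SimpleGraph V) (side : V → Bool)
    (hbipG : IsBipartiteWith G side)
    (rank : Sym2 V → ℕ) (r : ℕ) (hr : RanksBounded H rank r)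
    (a : V) (ha : side a = false) (haG : ∀ v, ¬ G.Adj a v)
    (N : Set V) (hNside : ∀ p ∈ N, side p = true)
    (hH : ∀ u v, H.Adj u v ↔ G.Adj u v ∨ (u = a ∧ v ∈ N) ∨ (v = a ∧ u ∈ N))
    (M M' : Set (Sym2 V))
    (hM : IsRankMaximal G rank r M) (hM' : IsRankMaximal H rank r M') :
    M.ncard ≤ M'.ncard ∧ M'.ncard ≤ M.ncard + 1 :=
  add_applicant_cardinality_general G H rank r hr a haG N hH M M' hM hM'
end

section
/- Let G = (A ∪ P, E) be a bipartite graph, M a maximum matching in G, and let H be obtained from G by adding a new vertex a to the A-side together with edges from a to a set N ⊆ P of neighbors. If some vertex of N is even with respect to M in G, then the maximum matching size of H equals that of G plus one; otherwise (every vertex of N is odd or unreachable with respect to M in G) M itself is a maximum matching of H. -/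
open SimpleGraph

variable {V : Type*}

/-- The maximum matching size of `G`. -/
noncomputable def matchNum (G : SimpleGraph V) : ℕ :=
  sSup {n | ∃ M, IsMatchingIn G M ∧ n = M.ncard}


/-! If `p ∈ N` is even, the even alternating path ending at `p` starts at an unmatched vertex;
exchanging the edges along it frees `p` without changing `|M|`, and then `a p` can be added.
Since deleting `a` loses at most one edge, `H` gains at most one. Conversely, a matching of `H`
larger than `M` uses an edge `a q`, and deleting it leaves a maximum matching of `G` that misses
`q`; comparing it with `M` shows that `q` is even. Finally, for a maximum matching of a bipartite
graph no vertex is both even and odd: the two alternating paths would combine into an augmenting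
walk, which could be shortened to an augmenting path because cycles have even length. -/

namespace IsMatchingIn

variable {G : SimpleGraph V} {M : Set (Sym2 V)}

theorem eq_of_mem_of_mem (hM : IsMatchingIn G M) {e f : Sym2 V} (he : e ∈ M) (hf : f ∈ M)
    {v : V} (hve : v ∈ e) (hvf : v ∈ f) : e = f := by
  by_contra hne
  exact hM.2 e he f hf hne v hve hvf

theorem eq_of_mk_mem_of_mk_mem (hM : IsMatchingIn G M) {u v w : V} (huv : s(u, v) ∈ M)
    (hvw : s(v, w) ∈ M) : u = w := by
  have := hM.eq_of_mem_of_mem huv hvw (Sym2.mem_mk_right u v) (Sym2.mem_mk_left v w)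
  rw [Sym2.eq_iff] at this
  rcases this with ⟨rfl, rfl⟩ | ⟨rfl, -⟩ <;> rfl

theorem mono_s14 {H : SimpleGraph V} (hM : IsMatchingIn G M) (hGH : G ≤ H) : IsMatchingIn H M :=
  ⟨hM.1.trans (SimpleGraph.edgeSet_mono hGH), hM.2⟩

theorem subset_s14 (hM : IsMatchingIn G M) {M' : Set (Sym2 V)} (h : M' ⊆ M) : IsMatchingIn G M' :=
  ⟨h.trans hM.1, fun e he f hf => hM.2 e (h he) f (h hf)⟩

theorem insert_mk (hM : IsMatchingIn G M) {u v : V} (huv : G.Adj u v) (hu : ¬ IsMatchedBy M u)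
    (hv : ¬ IsMatchedBy M v) : IsMatchingIn G (insert s(u, v) M) := by
  have key : ∀ f ∈ M, ∀ w ∈ s(u, v), w ∉ f := by
    rintro f hf w hw hwf
    rcases Sym2.mem_iff.mp hw with rfl | rfl
    exacts [hu ⟨f, hf, hwf⟩, hv ⟨f, hf, hwf⟩]
  refine ⟨Set.insert_subset huv hM.1, ?_⟩
  rintro e (rfl | he) f (rfl | hf) hne w hwe hwf
  exacts [hne rfl, key f hf w hwe hwf, key e he w hwf hwe, hM.2 e he f hf hne w hwe hwf]

end IsMatchingIn

theorem IsMaxMatching.matchNum_eq {G : SimpleGraph V} {M : Set (Sym2 V)}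
    (hM : IsMaxMatching G M) : matchNum G = M.ncard := by
  have hub : M.ncard ∈ upperBounds {n | ∃ M', IsMatchingIn G M' ∧ n = M'.ncard} := by
    rintro n ⟨M', hM', rfl⟩
    exact hM.2 M' hM'
  exact le_antisymm (csSup_le ⟨_, M, hM.1, rfl⟩ hub) (le_csSup ⟨_, hub⟩ ⟨M, hM.1, rfl⟩)

/-- Alternating walks are sequences read up to index `n`; unlike the paths of `IsAltPath` they
may repeat vertices. -/
def IsAltWalk (G : SimpleGraph V) (M : Set (Sym2 V)) (f : ℕ → V) (n : ℕ) : Prop :=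
  ∀ i < n, G.Adj (f i) (f (i + 1)) ∧ (s(f i, f (i + 1)) ∈ M ↔ Odd i)

theorem mk_ne_mk_of_injOn {f : ℕ → V} {n i j : ℕ} (hinj : Set.InjOn f (Set.Iic n))
    (hi : i < n) (hj : j < n) (hij : i ≠ j) : s(f i, f (i + 1)) ≠ s(f j, f (j + 1)) := by
  have mem : ∀ {k}, k ≤ n → k ∈ Set.Iic n := id
  rw [Ne, Sym2.eq_iff]
  rintro (⟨h, -⟩ | ⟨h, h'⟩)
  · exact hij (hinj (mem hi.le) (mem hj.le) h)
  · have := hinj (mem hi.le) (mem hj) h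
    have := hinj (mem hi) (mem hj.le) h'
    omega

theorem injOn_add_of_injOn {f : ℕ → V} {n k : ℕ} (hinj : Set.InjOn f (Set.Iic (n + k))) :
    Set.InjOn (fun i => f (i + k)) (Set.Iic n) := fun i hi j hj h => by
  have := hinj (show i + k ≤ n + k by simp_all) (show j + k ≤ n + k by simp_all) h
  omega

theorem injOn_sub_of_injOn {f : ℕ → V} {n : ℕ} (hinj : Set.InjOn f (Set.Iic n)) :
    Set.InjOn (fun t => f (n - t)) (Set.Iic n) := fun i hi j hj h => by
  have := hinj (show n - i ≤ n by omega) (show n - j ≤ n by omega) h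
  simp only [Set.mem_Iic] at hi hj
  omega

namespace IsAltWalk

variable {G : SimpleGraph V} {M : Set (Sym2 V)} {f : ℕ → V} {n : ℕ}

theorem mk_mem_iff (hf : IsAltWalk G M f n) {i : ℕ} (hi : i < n) :
    s(f i, f (i + 1)) ∈ M ↔ Odd i :=
  (hf i hi).2

/-- `M'` is `M` with the edge `f 0 f 1` added and the edge `f 1 f 2` removed. -/
theorem exists_flip_two [Finite V] (hM : IsMatchingIn G M) (hf : IsAltWalk G M f (n + 2))
    (hinj : Set.InjOn f (Set.Iic (n + 2))) (h0 : ¬ IsMatchedBy M (f 0)) :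
    ∃ M', IsMatchingIn G M' ∧ M'.ncard = M.ncard ∧ IsAltWalk G M' (fun i => f (i + 2)) n ∧
      ¬ IsMatchedBy M' (f 2) ∧ ∀ v, v ≠ f 0 → v ≠ f 1 → IsMatchedBy M' v → IsMatchedBy M v := by
  have mem : ∀ {k}, k ≤ n + 2 → k ∈ Set.Iic (n + 2) := id
  have he0 : s(f 0, f 1) ∉ M := by simpa using hf.mk_mem_iff (by omega : 0 < n + 2)
  have he1 : s(f 1, f 2) ∈ M := by simpa using hf.mk_mem_iff (by omega : 1 < n + 2)
  have hrest : ∀ g ∈ M \ {s(f 1, f 2)}, f 1 ∉ g := fun g hg h1 =>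
    hg.2 (hM.eq_of_mem_of_mem hg.1 he1 h1 (Sym2.mem_mk_left _ _))
  refine ⟨insert s(f 0, f 1) (M \ {s(f 1, f 2)}), ?_, ?_, ?_, ?_, ?_⟩
  · refine (hM.subset_s14 Set.sdiff_subset).insert_mk (hf 0 (by omega)).1
      (fun ⟨g, hg, h⟩ => h0 ⟨g, hg.1, h⟩) (fun ⟨g, hg, h⟩ => hrest g hg h)
  · rw [Set.ncard_insert_of_notMem (fun h => he0 h.1), Set.ncard_sdiff_singleton_add_one he1]
  · intro i hi
    have hne0 := mk_ne_mk_of_injOn hinj (by omega : i + 2 < n + 2) (by omega : 0 < n + 2)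
      (by omega)
    have hne1 := mk_ne_mk_of_injOn hinj (by omega : i + 2 < n + 2) (by omega : 1 < n + 2)
      (by omega)
    refine ⟨(hf (i + 2) (by omega)).1, ?_⟩
    simp only [Set.mem_insert_iff, Set.mem_sdiff, Set.mem_singleton_iff, hne0, hne1,
      false_or, not_false_eq_true, and_true]
    rw [hf.mk_mem_iff (by omega), Nat.odd_add, iff_true_right even_two]
  · rintro ⟨g, hg | hg, h2⟩
    · subst hg
      rcases Sym2.mem_iff.mp h2 with h | h <;>
        exact absurd (hinj (mem (by omega)) (mem (by omega)) h) (by omega)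
    · exact hg.2 (hM.eq_of_mem_of_mem hg.1 he1 h2 (Sym2.mem_mk_right _ _))
  · rintro v hv0 hv1 ⟨g, hg | hg, hv⟩
    · subst hg
      rcases Sym2.mem_iff.mp hv with rfl | rfl <;> contradiction
    · exact ⟨g, hg.1, hv⟩

theorem exists_matching_not_isMatchedBy_last [Finite V] (hM : IsMatchingIn G M)
    (hf : IsAltWalk G M f n) (hinj : Set.InjOn f (Set.Iic n)) (h0 : ¬ IsMatchedBy M (f 0))
    (hn : Even n) :
    ∃ M', IsMatchingIn G M' ∧ M'.ncard = M.ncard ∧ ¬ IsMatchedBy M' (f n) := by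
  induction n using Nat.twoStepInduction generalizing f M with
  | zero => exact ⟨M, hM, rfl, h0⟩
  | one => simp at hn
  | more n ih _ =>
    obtain ⟨M₁, hM₁, hcard, hf₁, h₁, -⟩ := exists_flip_two hM hf hinj h0
    obtain ⟨M', hM', hcard', h'⟩ :=
      ih hM₁ hf₁ (injOn_add_of_injOn hinj) h₁ (by simpa [Nat.even_add] using hn)
    exact ⟨M', hM', hcard'.trans hcard, h'⟩

theorem exists_matching_ncard_succ [Finite V] (hM : IsMatchingIn G M)
    (hf : IsAltWalk G M f n) (hinj : Set.InjOn f (Set.Iic n)) (h0 : ¬ IsMatchedBy M (f 0))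
    (hn : Odd n) (hlast : ¬ IsMatchedBy M (f n)) :
    ∃ M', IsMatchingIn G M' ∧ M'.ncard = M.ncard + 1 := by
  induction n using Nat.twoStepInduction generalizing f M with
  | zero => simp at hn
  | one =>
    refine ⟨insert s(f 0, f 1) M, hM.insert_mk (hf 0 one_pos).1 h0 hlast, ?_⟩
    exact Set.ncard_insert_of_notMem (by simpa using hf.mk_mem_iff one_pos)
  | more n ih _ =>
    have mem : ∀ {k}, k ≤ n + 2 → k ∈ Set.Iic (n + 2) := id
    obtain ⟨M₁, hM₁, hcard, hf₁, h₁, hmatched⟩ := exists_flip_two hM hf hinj h0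
    have hn' : Odd n := by simpa [Nat.odd_add] using hn
    have hlast₁ : ¬ IsMatchedBy M₁ (f (n + 2)) := fun h => hlast <| hmatched _
      (fun h => absurd (hinj (mem le_rfl) (mem (by omega)) h) (by omega))
      (fun h => absurd (hinj (mem le_rfl) (mem (by omega)) h) (by omega)) h
    obtain ⟨M', hM', hcard'⟩ := ih hM₁ hf₁ (injOn_add_of_injOn hinj) h₁ hn' hlast₁
    exact ⟨M', hM', hcard'.trans (by rw [hcard])⟩

end IsAltWalk

namespace IsBipartiteWith

variable {G : SimpleGraph V} {side : V → Bool} {f : ℕ → V} {n : ℕ}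

theorem side_eq_iff_even (hbip : IsBipartiteWith G side) (hf : ∀ i < n, G.Adj (f i) (f (i + 1)))
    {i : ℕ} (hi : i ≤ n) : side (f i) = side (f 0) ↔ Even i := by
  induction i with
  | zero => simp
  | succ i ih =>
    have hne := hbip _ _ (hf i hi)
    rw [Nat.even_add_one, ← ih (by omega)]
    revert hne
    cases side (f i) <;> cases side (f (i + 1)) <;> cases side (f 0) <;> decide

theorem even_iff_of_eq (hbip : IsBipartiteWith G side) (hf : ∀ i < n, G.Adj (f i) (f (i + 1)))
    {i j : ℕ} (hi : i ≤ n) (hj : j ≤ n) (h : f i = f j) : Even i ↔ Even j := by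
  rw [← hbip.side_eq_iff_even hf hi, ← hbip.side_eq_iff_even hf hj, h]

end IsBipartiteWith

namespace IsAltWalk

variable {G : SimpleGraph V} {M : Set (Sym2 V)} {side : V → Bool} {f : ℕ → V} {n : ℕ}

/-- In a bipartite graph a closed subwalk `f i, …, f j` has even length, so cutting it out
keeps the alternation. -/
theorem cut (hbip : IsBipartiteWith G side) (hf : IsAltWalk G M f n) {i j : ℕ} (hij : i < j)
    (hjn : j ≤ n) (h : f i = f j) :
    IsAltWalk G M (fun t => if t ≤ i then f t else f (t + (j - i))) (n - (j - i)) := by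
  have hd : Even (j - i) := by
    rw [Nat.even_sub hij.le]
    exact (hbip.even_iff_of_eq (fun k hk => (hf k hk).1) (by omega) hjn h).symm
  intro t ht
  obtain ⟨τ, hτ⟩ : ∃ τ, τ = if t < i then t else t + (j - i) := ⟨_, rfl⟩
  have hτn : τ < n := by split_ifs at hτ <;> omega
  have hfst : (if t ≤ i then f t else f (t + (j - i))) = f τ := by
    split_ifs at hτ ⊢ with h₁ h₂ <;> subst hτ
    · rfl
    · rw [show t = i by omega, h]; congr 1; omega
    · omega
    · rfl
  have hsnd : (if t + 1 ≤ i then f (t + 1) else f (t + 1 + (j - i))) = f (τ + 1) := by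
    split_ifs at hτ ⊢ <;> subst hτ <;> first | rfl | omega | (congr 1; omega)
  dsimp only
  rw [hfst, hsnd]
  refine ⟨(hf τ hτn).1, (hf.mk_mem_iff hτn).trans ?_⟩
  split_ifs at hτ <;> subst hτ
  · rfl
  · simp only [Nat.odd_add, hd, iff_true]

theorem exists_injOn (hbip : IsBipartiteWith G side) (hf : IsAltWalk G M f n) :
    ∃ g m, IsAltWalk G M g m ∧ Set.InjOn g (Set.Iic m) ∧ g 0 = f 0 ∧ g m = f n ∧
      (Even m ↔ Even n) := by
  induction n using Nat.strong_induction_on generalizing f with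
  | _ n ih =>
  by_cases hinj : Set.InjOn f (Set.Iic n)
  · exact ⟨f, n, hf, hinj, rfl, rfl, Iff.rfl⟩
  obtain ⟨i, j, hij, hjn, h⟩ : ∃ i j, i < j ∧ j ≤ n ∧ f i = f j := by
    simp only [Set.InjOn, Set.mem_Iic, not_forall] at hinj
    obtain ⟨i, hi, j, hj, h, hne⟩ := hinj
    rcases Nat.lt_or_gt_of_ne hne with hlt | hlt
    exacts [⟨i, j, hlt, hj, h⟩, ⟨j, i, hlt, hi, h.symm⟩]
  have hd := (hbip.even_iff_of_eq (fun k hk => (hf k hk).1) (by omega) hjn h)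
  obtain ⟨g, m, hg, hginj, hg0, hgm, hm⟩ := ih (n - (j - i)) (by omega) (hf.cut hbip hij hjn h)
  refine ⟨g, m, hg, hginj, by simpa using hg0, ?_, ?_⟩
  · rw [hgm]
    split_ifs with hle
    · rw [show n - (j - i) = i by omega, h, show j = n by omega]
    · congr 1; omega
  · rw [hm, Nat.even_sub (by omega), Nat.even_sub hij.le, hd]
    tauto

end IsAltWalk

theorem IsMaxMatching.isMatchedBy_of_isAltWalk [Finite V] {G : SimpleGraph V}
    {M : Set (Sym2 V)} {side : V → Bool} {f : ℕ → V} {n : ℕ} (hbip : IsBipartiteWith G side)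
    (hM : IsMaxMatching G M) (hf : IsAltWalk G M f n) (hn : Odd n)
    (h0 : ¬ IsMatchedBy M (f 0)) : IsMatchedBy M (f n) := by
  by_contra hlast
  obtain ⟨g, m, hg, hginj, hg0, hgm, hm⟩ := hf.exists_injOn hbip
  obtain ⟨M', hM', hcard⟩ := hg.exists_matching_ncard_succ hM.1 hginj (hg0 ▸ h0)
    (by simpa [← Nat.not_even_iff_odd, hm] using hn) (hgm ▸ hlast)
  have := hM.2 M' hM'
  omega

theorem length_pathEdges (p : List V) : (pathEdges p).length = p.length - 1 := by
  simp [pathEdges]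

theorem getElem_pathEdges (p : List V) {i : ℕ} (hi : i < (pathEdges p).length) :
    (pathEdges p)[i] = s(p[i]'(by rw [length_pathEdges] at hi; omega),
      p[i + 1]'(by rw [length_pathEdges] at hi; omega)) := by
  simp [pathEdges]

theorem pathEdges_map_range (f : ℕ → V) (n : ℕ) :
    pathEdges ((List.range (n + 1)).map f) = (List.range n).map fun i => s(f i, f (i + 1)) := by
  refine List.ext_getElem (by simp [length_pathEdges]) fun i h _ => ?_
  simp [getElem_pathEdges]

namespace IsAltPath

variable {G : SimpleGraph V} {M : Set (Sym2 V)} {u v : V} {p : List V}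

theorem length_pos (hp : IsAltPath G M u v p) : 0 < p.length := by
  rcases p with _ | _
  · simpa using hp.2.2.2.1
  · simp

theorem getD_zero (hp : IsAltPath G M u v p) : p.getD 0 u = u := by
  have := hp.2.2.2.1
  rw [List.head?_eq_getElem?] at this
  simp [List.getD_eq_getElem?_getD, this]

theorem getD_length_pathEdges (hp : IsAltPath G M u v p) :
    p.getD (pathEdges p).length u = v := by
  have := hp.2.2.2.2
  rw [List.getLast?_eq_getElem?] at this
  simp [List.getD_eq_getElem?_getD, length_pathEdges, this]

theorem injOn (hp : IsAltPath G M u v p) :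
    Set.InjOn (fun i => p.getD i u) (Set.Iic (pathEdges p).length) := by
  intro i hi j hj h
  simp only [Set.mem_Iic, length_pathEdges] at hi hj
  have := hp.length_pos
  simp only [List.getD_eq_getElem _ _ (by omega : i < p.length),
    List.getD_eq_getElem _ _ (by omega : j < p.length)] at h
  exact (hp.2.1.getElem_inj_iff).mp h

theorem isAltWalk (hp : IsAltPath G M u v p) (hu : ¬ IsMatchedBy M u) :
    IsAltWalk G M (fun i => p.getD i u) (pathEdges p).length := by
  have hlen := length_pathEdges p
  have hget : ∀ i (hi : i < (pathEdges p).length),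
      s(p.getD i u, p.getD (i + 1) u) = (pathEdges p)[i] := fun i hi => by
    rw [getElem_pathEdges, List.getD_eq_getElem, List.getD_eq_getElem]
  have hmem : ∀ i (hi : i < (pathEdges p).length), ((pathEdges p)[i] ∈ M ↔ Odd i) := by
    intro i hi
    induction i with
    | zero =>
      simp only [Nat.not_odd_zero, iff_false]
      rw [← hget 0 hi, hp.getD_zero]
      exact fun h => hu ⟨_, h, Sym2.mem_mk_left _ _⟩
    | succ i ih =>
      rw [Nat.odd_add_one, ← ih (by omega)]
      have := List.isChain_iff_getElem.mp hp.2.2.1 i hi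
      tauto
  intro i hi
  refine ⟨?_, by rw [hget i hi]; exact hmem i hi⟩
  dsimp only
  rw [List.getD_eq_getElem _ _ (by omega), List.getD_eq_getElem _ _ (by omega)]
  exact List.isChain_iff_getElem.mp hp.1 i (by omega)

end IsAltPath

theorem evenVtx_of_isAltWalk {G : SimpleGraph V} {M : Set (Sym2 V)} {f : ℕ → V} {n : ℕ}
    (hf : IsAltWalk G M f n) (hinj : Set.InjOn f (Set.Iic n)) (h0 : ¬ IsMatchedBy M (f 0))
    (hn : Even n) : EvenVtx G M (f n) := by
  refine ⟨f 0, (List.range (n + 1)).map f, h0, ⟨?_, ?_, ?_, ?_, ?_⟩, ?_⟩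
  · refine List.isChain_iff_getElem.mpr fun i hi => ?_
    simpa using (hf i (by simpa using hi)).1
  · refine (List.nodup_map_iff_inj_on List.nodup_range).mpr fun i hi j hj h => ?_
    simp only [List.mem_range] at hi hj
    exact hinj (show i ≤ n by omega) (show j ≤ n by omega) h
  · rw [pathEdges_map_range]
    refine List.isChain_iff_getElem.mpr fun i hi => ?_
    simp only [List.length_map, List.length_range] at hi
    simp only [List.getElem_map, List.getElem_range, hf.mk_mem_iff hi,
      hf.mk_mem_iff (by omega : i < n), Nat.odd_add_one, not_not]
  · simp [List.head?_eq_getElem?]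
  · simp [List.getLast?_eq_getElem?]
  · simpa [pathEdges_map_range] using hn

theorem IsAltWalk.append_reverse {G : SimpleGraph V} {M : Set (Sym2 V)} {f g : ℕ → V}
    {m n : ℕ} (hg : IsAltWalk G M g m) (hf : IsAltWalk G M f n) (hgf : g m = f n) (hm : Odd m)
    (hn : Even n) :
    IsAltWalk G M (fun t => if t < m then g t else f (m + n - t)) (m + n) := by
  intro t ht
  dsimp only
  by_cases htm : t < m
  · have hsnd : (if t + 1 < m then g (t + 1) else f (m + n - (t + 1))) = g (t + 1) := by
      split_ifs
      · rfl
      · rw [show t + 1 = m by omega, hgf]; congr 1; omega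
    rw [if_pos htm, hsnd]
    exact hg t htm
  rw [if_neg htm, if_neg (by omega), show m + n - t = m + n - (t + 1) + 1 by omega, Sym2.eq_swap]
  have hk : m + n - (t + 1) < n := by omega
  refine ⟨(hf _ hk).1.symm, (hf.mk_mem_iff hk).trans ?_⟩
  have : Even (m + n - (t + 1) + t) := by
    rw [show m + n - (t + 1) + t = m + n - 1 by omega, Nat.even_sub (by omega)]
    simp [Nat.even_add, hn, Nat.not_even_iff_odd.mpr hm]
  rw [Nat.even_add] at this
  rw [← Nat.not_even_iff_odd, ← Nat.not_even_iff_odd, this]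

/-- The two alternating paths, glued at `q`, form an augmenting walk. -/
theorem IsMaxMatching.not_evenVtx_of_oddVtx [Finite V] {G : SimpleGraph V} {M : Set (Sym2 V)}
    {side : V → Bool} {q : V} (hbip : IsBipartiteWith G side) (hM : IsMaxMatching G M)
    (hodd : OddVtx G M q) : ¬ EvenVtx G M q := by
  rintro ⟨u, P, hu, hP, hPeven⟩
  obtain ⟨w, Q, hw, hQ, hQodd⟩ := hodd
  have hwalk := (hQ.isAltWalk hw).append_reverse (hP.isAltWalk hu)
    (by rw [hQ.getD_length_pathEdges, hP.getD_length_pathEdges]) hQodd hPeven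
  have := hM.isMatchedBy_of_isAltWalk hbip hwalk (hQodd.add_even hPeven)
    (by rwa [if_pos hQodd.pos, hQ.getD_zero])
  rw [if_neg (by omega), Nat.sub_self, hP.getD_zero] at this
  exact hu this

open Classical in
/-- The partner of `v` in `M`, or `v` itself if `M` does not cover `v`. -/
noncomputable def mate (M : Set (Sym2 V)) (v : V) : V :=
  if h : ∃ w, s(v, w) ∈ M then h.choose else v

theorem mk_mate_mem {M : Set (Sym2 V)} {v : V} (h : IsMatchedBy M v) : s(v, mate M v) ∈ M := by
  obtain ⟨e, he, hv⟩ := h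
  have hex : ∃ w, s(v, w) ∈ M := ⟨_, (Sym2.other_spec hv).symm ▸ he⟩
  rw [mate, dif_pos hex]
  exact hex.choose_spec

noncomputable def mateSeq (M K : Set (Sym2 V)) (q : V) : ℕ → V
  | 0 => q
  | i + 1 => mate (if Even i then M else K) (mateSeq M K q i)

def AlternatesBetween (M K : Set (Sym2 V)) (x : ℕ → V) (n : ℕ) : Prop :=
  ∀ i < n, s(x i, x (i + 1)) ∈ if Even i then M else K

theorem IsMatchingIn.not_mk_mem_of_mk_mem {G : SimpleGraph V} {L : Set (Sym2 V)} {x : ℕ → V}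
    {n i : ℕ} (hL : IsMatchingIn G L) (hinj : Set.InjOn x (Set.Iic n)) (hi : i + 2 ≤ n)
    (h : s(x i, x (i + 1)) ∈ L) : s(x (i + 1), x (i + 2)) ∉ L := fun h' => by
  have := hinj (show i ≤ n by omega) (show i + 2 ≤ n from hi)
    (hL.eq_of_mk_mem_of_mk_mem h h')
  omega

namespace AlternatesBetween

variable {G : SimpleGraph V} {side : V → Bool} {M K : Set (Sym2 V)} {x : ℕ → V} {n : ℕ}

theorem adj (hx : AlternatesBetween M K x n) (hM : IsMatchingIn G M) (hK : IsMatchingIn G K) :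
    ∀ i < n, G.Adj (x i) (x (i + 1)) := fun i hi => by
  have := hx i hi
  split_ifs at this
  exacts [hM.1 this, hK.1 this]

/-- If `x i = x j` with `i < j`, the edges entering them lie in the same matching (the graph is
bipartite), hence coincide, so `x (i - 1) = x (j - 1)`; going back this ends in `x 0 = x (j - i)`,
which would put `x 0` on an edge of `K`. -/
theorem injOn (hx : AlternatesBetween M K x n) (hM : IsMatchingIn G M) (hK : IsMatchingIn G K)
    (hbip : IsBipartiteWith G side) (h0 : ¬ IsMatchedBy K (x 0)) : Set.InjOn x (Set.Iic n) := by
  have hadj := hx.adj hM hK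
  suffices h : ∀ i j, i < j → j ≤ n → x i ≠ x j by
    intro i hi j hj hij
    by_contra hne
    rcases Nat.lt_or_gt_of_ne hne with hlt | hlt
    exacts [h i j hlt hj hij, h j i hlt hi hij.symm]
  intro i
  induction i with
  | zero =>
    intro j hj hjn hx0
    have hj' : Even j := (hbip.even_iff_of_eq hadj (Nat.zero_le n) hjn hx0).mp ⟨0, rfl⟩
    have hK' := hx (j - 1) (by omega)
    rw [if_neg (by rw [Nat.even_sub (by omega)]; simp [hj']), Nat.sub_add_cancel hj] at hK'
    exact h0 ⟨_, hK', hx0 ▸ Sym2.mem_mk_right _ _⟩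
  | succ i ih =>
    intro j hj hjn hxi
    have hij : (Even i ↔ Even (j - 1)) := by
      have := hbip.even_iff_of_eq hadj (by omega) hjn hxi
      rw [Nat.even_add_one, Nat.even_sub (by omega)] at *
      simp only [Nat.not_even_one, iff_false] at this ⊢
      tauto
    have h₁ := hx i (by omega)
    have h₂ := hx (j - 1) (by omega)
    have hL : (if Even (j - 1) then M else K) = if Even i then M else K := by simp only [hij]
    rw [Nat.sub_add_cancel (by omega : 1 ≤ j), ← hxi, Sym2.eq_swap, hL] at h₂
    refine ih (j - 1) (by omega) (by omega) ?_
    split_ifs at h₁ h₂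
    exacts [hM.eq_of_mk_mem_of_mk_mem h₁ h₂, hK.eq_of_mk_mem_of_mk_mem h₁ h₂]

theorem isAltWalk_right (hx : AlternatesBetween M K x n) (hM : IsMatchingIn G M)
    (hK : IsMatchingIn G K) (hbip : IsBipartiteWith G side) (h0 : ¬ IsMatchedBy K (x 0)) :
    IsAltWalk G K x n := by
  have hinj := hx.injOn hM hK hbip h0
  intro i hi
  refine ⟨hx.adj hM hK i hi, ?_⟩
  have h := hx i hi
  split_ifs at h with hi'
  · rw [iff_false_intro (Nat.not_odd_iff_even.mpr hi'), iff_false]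
    rcases i with _ | i
    · exact fun hK' => h0 ⟨_, hK', Sym2.mem_mk_left _ _⟩
    · have h' := hx i (by omega)
      rw [if_neg (by simpa [Nat.even_add_one] using hi')] at h'
      exact hK.not_mk_mem_of_mk_mem hinj (by omega) h'
  · exact iff_of_true h (Nat.not_even_iff_odd.mp hi')

theorem mk_mem_left_iff (hx : AlternatesBetween M K x n) (hM : IsMatchingIn G M)
    (hK : IsMatchingIn G K) (hbip : IsBipartiteWith G side) (h0 : ¬ IsMatchedBy K (x 0))
    {i : ℕ} (hi : i < n) : s(x i, x (i + 1)) ∈ M ↔ Even i := by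
  have hinj := hx.injOn hM hK hbip h0
  have h := hx i hi
  split_ifs at h with hi'
  · exact iff_of_true h hi'
  · rw [iff_false_intro hi', iff_false]
    rcases i with _ | i
    · exact (hi' ⟨0, rfl⟩).elim
    · have h' := hx i (by omega)
      rw [if_pos (by simpa [Nat.even_add_one] using hi')] at h'
      exact hM.not_mk_mem_of_mk_mem hinj (by omega) h'

theorem isAltWalk_left_reverse (hx : AlternatesBetween M K x n) (hM : IsMatchingIn G M)
    (hK : IsMatchingIn G K) (hbip : IsBipartiteWith G side) (h0 : ¬ IsMatchedBy K (x 0))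
    (hn : Even n) : IsAltWalk G M (fun t => x (n - t)) n := by
  intro t ht
  have hk : n - (t + 1) < n := by omega
  have hsucc : n - t = n - (t + 1) + 1 := by omega
  dsimp only
  rw [hsucc, Sym2.eq_swap, hx.mk_mem_left_iff hM hK hbip h0 hk]
  refine ⟨(hx.adj hM hK _ hk).symm, ?_⟩
  rw [Nat.even_sub (by omega), Nat.even_add_one]
  simp [hn, Nat.not_even_iff_odd]

end AlternatesBetween

/-- Berge's argument: following `M` and `K` alternately from `q`, which `K` leaves uncovered,
one cannot stop at a vertex uncovered by `K` (that walk would augment `K`), so one stops at a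
vertex uncovered by `M`; read backwards, this walk shows that `q` is even. -/
theorem IsMaxMatching.evenVtx_of_not_isMatchedBy [Finite V] {G : SimpleGraph V}
    {side : V → Bool} {M K : Set (Sym2 V)} {q : V} (hbip : IsBipartiteWith G side)
    (hM : IsMaxMatching G M) (hK : IsMatchingIn G K) (hcard : M.ncard ≤ K.ncard)
    (hq : ¬ IsMatchedBy K q) : EvenVtx G M q := by
  classical
  set x := mateSeq M K q
  have hstep : ∀ i, IsMatchedBy (if Even i then M else K) (x i) →
      s(x i, x (i + 1)) ∈ if Even i then M else K := fun i => mk_mate_mem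
  have hex : ∃ n, ¬ IsMatchedBy (if Even n then M else K) (x n) := by
    by_contra! h
    refine not_injective_infinite_finite x fun i j hij => ?_
    exact AlternatesBetween.injOn (n := max i j) (fun k _ => hstep k (h k)) hM.1 hK hbip hq
      (le_max_left i j) (le_max_right i j) hij
  obtain ⟨n, hend, hx⟩ : ∃ n, ¬ IsMatchedBy (if Even n then M else K) (x n) ∧
      AlternatesBetween M K x n :=
    ⟨Nat.find hex, Nat.find_spec hex, fun i hi => hstep i (not_not.mp (Nat.find_min hex hi))⟩
  rcases Nat.even_or_odd n with hn | hn
  · rw [if_pos hn] at hend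
    have := evenVtx_of_isAltWalk (hx.isAltWalk_left_reverse hM.1 hK hbip hq hn)
      (injOn_sub_of_injOn (hx.injOn hM.1 hK hbip hq)) (by simpa using hend) hn
    rwa [Nat.sub_self] at this
  · rw [if_neg (Nat.not_even_iff_odd.mpr hn)] at hend
    have hKmax : IsMaxMatching G K := ⟨hK, fun N hN => (hM.2 N hN).trans hcard⟩
    exact (hend <| hKmax.isMatchedBy_of_isAltWalk hbip (hx.isAltWalk_right hM.1 hK hbip hq) hn
      hq).elim

section AddVertex

variable {G H : SimpleGraph V} {a : V} {N : Set V} {K : Set (Sym2 V)}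

theorem not_isMatchedBy_of_forall_not_adj (haG : ∀ v, ¬ G.Adj a v) (hK : IsMatchingIn G K) :
    ¬ IsMatchedBy K a := fun ⟨e, he, hae⟩ =>
  haG _ (by rw [← Sym2.other_spec hae] at he; exact hK.1 he)

theorem ncard_insert_mk_of_forall_not_adj [Finite V] (haG : ∀ v, ¬ G.Adj a v)
    (hK : IsMatchingIn G K) (q : V) : (insert s(a, q) K).ncard = K.ncard + 1 :=
  Set.ncard_insert_of_notMem fun h =>
    not_isMatchedBy_of_forall_not_adj haG hK ⟨_, h, Sym2.mem_mk_left a q⟩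

variable (hH : ∀ u v, H.Adj u v ↔ G.Adj u v ∨ (u = a ∧ v ∈ N) ∨ (v = a ∧ u ∈ N))
include hH

theorem le_of_adj_iff : G ≤ H := fun u v h => (hH u v).mpr (Or.inl h)

variable (haG : ∀ v, ¬ G.Adj a v)
include haG

theorem IsMatchingIn.insert_mk_of_adj_iff (hK : IsMatchingIn G K) {q : V} (hq : q ∈ N)
    (hqK : ¬ IsMatchedBy K q) : IsMatchingIn H (insert s(a, q) K) :=
  (hK.mono_s14 (le_of_adj_iff hH)).insert_mk ((hH a q).mpr (Or.inr (Or.inl ⟨rfl, hq⟩)))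
    (not_isMatchedBy_of_forall_not_adj haG hK) hqK

theorem IsMatchingIn.isMatchingIn_or_eq_insert_mk {M' : Set (Sym2 V)} (hM' : IsMatchingIn H M') :
    IsMatchingIn G M' ∨
      ∃ q ∈ N, ∃ K, IsMatchingIn G K ∧ ¬ IsMatchedBy K q ∧ M' = insert s(a, q) K := by
  have hG : ∀ K ⊆ M', (∀ e ∈ K, a ∉ e) → IsMatchingIn G K := by
    refine fun K hK ha => ⟨fun e he => ?_, (hM'.subset_s14 hK).2⟩
    induction e using Sym2.ind with
    | _ u v =>
      have := (hH u v).mp (hM'.1 (hK he))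
      have := ha _ he
      simp only [Sym2.mem_iff, not_or] at this
      tauto
  by_cases ha : ∃ e ∈ M', a ∈ e
  swap
  · push Not at ha
    exact Or.inl (hG M' le_rfl ha)
  obtain ⟨e, he, hae⟩ := ha
  obtain ⟨q, rfl⟩ : ∃ q, s(a, q) = e := ⟨_, Sym2.other_spec hae⟩
  have hother : ∀ f ∈ M' \ {s(a, q)}, ∀ v ∈ s(a, q), v ∉ f := fun f hf v hv hvf =>
    hf.2 (hM'.eq_of_mem_of_mem hf.1 he hvf hv)
  refine Or.inr ⟨q, ?_, M' \ {s(a, q)}, hG _ Set.sdiff_subset fun f hf => hother f hf a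
    (Sym2.mem_mk_left a q), fun ⟨f, hf, hqf⟩ => hother f hf q (Sym2.mem_mk_right a q) hqf,
    by rw [Set.insert_sdiff_singleton, Set.insert_eq_of_mem he]⟩
  have hadj : H.Adj a q := hM'.1 he
  rcases (hH a q).mp hadj with h | ⟨-, h⟩ | ⟨rfl, -⟩
  exacts [(haG q h).elim, h, (hadj.ne rfl).elim]

theorem ncard_le_succ_of_adj_iff [Finite V] {M M' : Set (Sym2 V)} (hM : IsMaxMatching G M)
    (hM' : IsMatchingIn H M') : M'.ncard ≤ M.ncard + 1 := by
  rcases hM'.isMatchingIn_or_eq_insert_mk hH haG with hG | ⟨q, -, K, hK, -, rfl⟩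
  · exact (hM.2 M' hG).trans (Nat.le_succ _)
  · rw [ncard_insert_mk_of_forall_not_adj haG hK]
    exact Nat.succ_le_succ (hM.2 K hK)

end AddVertex

theorem add_vertex_max_matching_general [Fintype V]
    (G H : SimpleGraph V) (side : V → Bool) (hbip : IsBipartiteWith G side)
    (a : V) (haG : ∀ v, ¬ G.Adj a v)
    (N : Set V)
    (hH : ∀ u v, H.Adj u v ↔ G.Adj u v ∨ (u = a ∧ v ∈ N) ∨ (v = a ∧ u ∈ N))
    (M : Set (Sym2 V)) (hM : IsMaxMatching G M) :
    ((∃ p ∈ N, EvenVtx G M p) → matchNum H = matchNum G + 1) ∧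
    ((∀ p ∈ N, OddVtx G M p ∨ UnreachableVtx G M p) → IsMaxMatching H M) := by
  refine ⟨fun ⟨q, hqN, u, P, hu, hP, hPeven⟩ => ?_,
    fun hN => ⟨hM.1.mono_s14 (le_of_adj_iff hH), fun M' hM' => ?_⟩⟩
  · obtain ⟨M₁, hM₁, hcard, hq⟩ := (hP.isAltWalk hu).exists_matching_not_isMatchedBy_last hM.1
      hP.injOn (by rwa [hP.getD_zero]) hPeven
    rw [hP.getD_length_pathEdges] at hq
    have hmax : IsMaxMatching H (insert s(a, q) M₁) := by
      refine ⟨hM₁.insert_mk_of_adj_iff hH haG hqN hq, fun M' hM' => ?_⟩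
      rw [ncard_insert_mk_of_forall_not_adj haG hM₁, hcard]
      exact ncard_le_succ_of_adj_iff hH haG hM hM'
    rw [hmax.matchNum_eq, hM.matchNum_eq, ncard_insert_mk_of_forall_not_adj haG hM₁, hcard]
  · rcases hM'.isMatchingIn_or_eq_insert_mk hH haG with hG | ⟨q, hqN, K, hK, hqK, rfl⟩
    · exact hM.2 M' hG
    by_contra! hlt
    rw [ncard_insert_mk_of_forall_not_adj haG hK] at hlt
    have heven := hM.evenVtx_of_not_isMatchedBy hbip hK (by omega) hqK
    rcases hN q hqN with hodd | hunreach
    · exact hM.not_evenVtx_of_oddVtx hbip hodd heven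
    · obtain ⟨u, p, hu, hp, -⟩ := heven
      exact hunreach ⟨u, p, hu, hp⟩

/-- Let `H` be obtained from the bipartite graph `G` by adding a new
vertex `a` on the applicant side (modelled as a vertex isolated in `G`) together
with edges from `a` to a set `N` of posts, and let `M` be a maximum matching of
`G`. If some vertex of `N` is even with respect to `M` in `G`, then the maximum
matching size of `H` is that of `G` plus one; otherwise (every vertex of `N` is
odd or unreachable) `M` itself is a maximum matching of `H`. -/
theorem add_vertex_max_matching [Fintype V]
    (G H : SimpleGraph V) (side : V → Bool) (hbip : IsBipartiteWith G side)
    (a : V) (ha : side a = false) (haG : ∀ v, ¬ G.Adj a v)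
    (N : Set V) (hNside : ∀ p ∈ N, side p = true)
    (hH : ∀ u v, H.Adj u v ↔ G.Adj u v ∨ (u = a ∧ v ∈ N) ∨ (v = a ∧ u ∈ N))
    (M : Set (Sym2 V)) (hM : IsMaxMatching G M) :
    ((∃ p ∈ N, EvenVtx G M p) → matchNum H = matchNum G + 1) ∧
    ((∀ p ∈ N, OddVtx G M p ∨ UnreachableVtx G M p) → IsMaxMatching H M) :=
  add_vertex_max_matching_general G H side hbip a haG N hH M hM
end
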